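/- arXiv:1910.11784 — 6 statements merged into one kernel-verified Lean document; each statement's English description precedes it below -/
import Mathlib

section
/- Let k, l be natural numbers, let R be a commutative ring with 0 ≠ 1, and let f : PEquiv (Fin k) (Fin l) be a partial equivalence (a rook diagram of type (l,k)). Then f is monotone (i.e., the rook diagram is planar) if and only if its associated matrix [f] is in pseudo-echelon form. -/
/-! The nonzero entries of `[f]` sit exactly at the positions `(f p, p)`, so read row by row,
pseudo-echelon form says that `f⁻¹` is strictly increasing on its domain. Between linear orders
a partial bijection is strictly increasing iff its inverse is: if `f` is increasing and
`f p < f q`, then `p = q` and `q < p` are both impossible. -/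

/-- A rook matrix: every entry is 0 or 1, and there is at most one entry
equal to 1 in each row and in each column. -/
def IsRookMatrix {l k : ℕ} {R : Type*} [CommRing R]
    (A : Matrix (Fin l) (Fin k) R) : Prop :=
  (∀ i j, A i j = 0 ∨ A i j = 1) ∧
  (∀ i j j', A i j = 1 → A i j' = 1 → j = j') ∧
  (∀ i i' j, A i j = 1 → A i' j = 1 → i = i')

/-- Pseudo-echelon form: if rows `i < i'` contain nonzero entries in columns
`j` and `j'` respectively, then `j < j'`. -/
def IsPseudoEchelon {l k : ℕ} {R : Type*} [CommRing R]
    (A : Matrix (Fin l) (Fin k) R) : Prop :=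
  ∀ i i' j j', i < i' → A i j ≠ 0 → A i' j' ≠ 0 → j < j'

/-- A permutation matrix: the 0–1 matrix of some permutation `σ`, with
entry 1 exactly in the positions `(σ j, j)`. -/
def IsPermMatrix {n : ℕ} {R : Type*} [CommRing R]
    (S : Matrix (Fin n) (Fin n) R) : Prop :=
  ∃ σ : Equiv.Perm (Fin n), ∀ i j, S i j = if i = σ j then 1 else 0

/-- The matrix `[f]` associated to a partial equivalence (rook diagram)
`f : PEquiv (Fin k) (Fin l)`: the `(q, p)` entry is 1 if `f p = q` and 0
otherwise. -/
def rookMatrixOf {k l : ℕ} (R : Type*) [CommRing R]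
    (f : PEquiv (Fin k) (Fin l)) : Matrix (Fin l) (Fin k) R :=
  fun q p => if f p = some q then 1 else 0

/-- A partial equivalence (rook diagram) is monotone (planar) if for all
`p, q` in its domain, `p < q` implies `f p < f q`. -/
def IsMonotonePE {k l : ℕ} (f : PEquiv (Fin k) (Fin l)) : Prop :=
  ∀ p q i j, i ∈ f p → j ∈ f q → p < q → i < j


namespace PEquiv

variable {α β : Type*}

def IsStrictMono [Preorder α] [Preorder β] (f : α ≃. β) : Prop :=
  ∀ p q i j, i ∈ f p → j ∈ f q → p < q → i < j

theorem IsStrictMono.lt_of_lt [LinearOrder α] [Preorder β] {f : α ≃. β} (hf : f.IsStrictMono)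
    {p q : α} {i j : β} (hi : i ∈ f p) (hj : j ∈ f q) (hij : i < j) : p < q := by
  rcases lt_trichotomy p q with hpq | rfl | hqp
  · exact hpq
  · cases Option.mem_unique hi hj
    exact absurd hij (lt_irrefl i)
  · exact absurd (hf q p j i hj hi hqp) hij.not_gt

theorem IsStrictMono.symm [LinearOrder α] [Preorder β] {f : α ≃. β} (hf : f.IsStrictMono) :
    f.symm.IsStrictMono :=
  fun _ _ _ _ hp hq hpq => hf.lt_of_lt (mem_iff_mem f |>.mp hp) (mem_iff_mem f |>.mp hq) hpq

theorem isStrictMono_symm_iff [LinearOrder α] [LinearOrder β] {f : α ≃. β} :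
    f.symm.IsStrictMono ↔ f.IsStrictMono :=
  ⟨fun h => symm_symm f ▸ h.symm, IsStrictMono.symm⟩

end PEquiv

theorem rookMatrixOf_ne_zero_iff {k l : ℕ} (R : Type*) [CommRing R] [Nontrivial R]
    (f : PEquiv (Fin k) (Fin l)) (q : Fin l) (p : Fin k) :
    rookMatrixOf R f q p ≠ 0 ↔ q ∈ f p := by
  simp only [rookMatrixOf, ne_eq, ite_eq_right_iff, one_ne_zero, imp_false, not_not]
  rfl

theorem isPseudoEchelon_rookMatrixOf_iff {k l : ℕ} (R : Type*) [CommRing R] [Nontrivial R]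
    (f : PEquiv (Fin k) (Fin l)) :
    IsPseudoEchelon (rookMatrixOf R f) ↔ f.symm.IsStrictMono := by
  simp only [IsPseudoEchelon, PEquiv.IsStrictMono, rookMatrixOf_ne_zero_iff,
    PEquiv.mem_iff_mem]
  exact ⟨fun h i i' j j' hi hi' hii' => h i i' j j' hii' hi hi',
    fun h i i' j j' hii' hi hi' => h i i' j j' hi hi' hii'⟩

theorem rook_planar_iff_pseudoEchelon {k l : ℕ} (R : Type*) [CommRing R]
    [Nontrivial R] (f : PEquiv (Fin k) (Fin l)) :
    IsMonotonePE f ↔ IsPseudoEchelon (rookMatrixOf R f) :=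
  PEquiv.isStrictMono_symm_iff.symm.trans (isPseudoEchelon_rookMatrixOf_iff R f).symm
end

section
/- Let R be a commutative ring with 0 ≠ 1 and let A be a rook matrix of size l × k over R. Then there exist a permutation matrix S of size l × l and a rook matrix P of size l × k in pseudo-echelon form such that A = S * P, and moreover P has exactly the same zero rows and exactly the same zero columns as A (for every i, row i of P is zero iff row i of A is zero, and for every j, column j of P is zero iff column j of A is zero). -/
open Function Equiv

theorem exists_perm_strictMono_comp {α β : Type*} [Fintype α] [LinearOrder α] [LinearOrder β]
    {f : α → β} (hf : Injective f) : ∃ σ : Perm α, StrictMono (f ∘ σ) := by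
  classical
  let o : α ≃o Set.range f := (Fintype.orderIsoFinOfCardEq α rfl).symm.trans
    (Fintype.orderIsoFinOfCardEq _ (Set.card_range_of_injective hf))
  refine ⟨o.toEquiv.trans (ofInjective f hf).symm, fun a b hab => ?_⟩
  simpa [apply_ofInjective_symm] using o.strictMono hab

namespace IsRookMatrix

variable {l k l' k' : ℕ} {R : Type*} [CommRing R] {A : Matrix (Fin l) (Fin k) R}

theorem submatrix (hA : IsRookMatrix A) {r : Fin l' → Fin l} {c : Fin k' → Fin k}
    (hr : Injective r) (hc : Injective c) : IsRookMatrix (A.submatrix r c) :=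
  ⟨fun i j => hA.1 (r i) (c j), fun i j j' h h' => hc (hA.2.1 (r i) _ _ h h'),
    fun i i' j h h' => hr (hA.2.2 _ _ (c j) h h')⟩

theorem col_eq_of_ne_zero (hA : IsRookMatrix A) {i : Fin l} {j j' : Fin k} (h : A i j ≠ 0)
    (h' : A i j' ≠ 0) : j = j' :=
  hA.2.1 i j j' ((hA.1 i j).resolve_left h) ((hA.1 i j').resolve_left h')

theorem row_eq_of_ne_zero (hA : IsRookMatrix A) {i i' : Fin l} {j : Fin k} (h : A i j ≠ 0)
    (h' : A i' j ≠ 0) : i = i' :=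
  hA.2.2 i i' j ((hA.1 i j).resolve_left h) ((hA.1 i' j).resolve_left h')

theorem exists_perm_isPseudoEchelon_submatrix (hA : IsRookMatrix A) :
    ∃ σ : Perm (Fin l), (∀ i, (∃ j, A (σ i) j ≠ 0) ↔ ∃ j, A i j ≠ 0) ∧
      IsPseudoEchelon (A.submatrix σ id) := by
  classical
  let col : {i // ∃ j, A i j ≠ 0} → Fin k := fun i => i.2.choose
  have hcol : ∀ i : {i // ∃ j, A i j ≠ 0}, A i (col i) ≠ 0 := fun i => i.2.choose_spec
  have col_injective : Injective col := fun i i' h =>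
    Subtype.ext (hA.row_eq_of_ne_zero (hcol i) (h ▸ hcol i'))
  obtain ⟨τ, hτ⟩ := exists_perm_strictMono_comp col_injective
  refine ⟨Perm.ofSubtype τ, Perm.ofSubtype_apply_mem_iff_mem τ, ?_⟩
  intro i i' j j' hii' hj hj'
  have hi : ∃ j, A i j ≠ 0 := (Perm.ofSubtype_apply_mem_iff_mem τ i).1 ⟨j, hj⟩
  have hi' : ∃ j, A i' j ≠ 0 := (Perm.ofSubtype_apply_mem_iff_mem τ i').1 ⟨j', hj'⟩
  rw [Matrix.submatrix_apply, id, Perm.ofSubtype_apply_of_mem τ hi] at hj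
  rw [Matrix.submatrix_apply, id, Perm.ofSubtype_apply_of_mem τ hi'] at hj'
  rw [hA.col_eq_of_ne_zero hj (hcol _), hA.col_eq_of_ne_zero hj' (hcol _)]
  exact hτ (show (⟨i, hi⟩ : {i // ∃ j, A i j ≠ 0}) < ⟨i', hi'⟩ from hii')

end IsRookMatrix

theorem rookMatrix_eq_perm_mul_pseudoEchelon_general {l k : ℕ} {R : Type*} [CommRing R]
    (A : Matrix (Fin l) (Fin k) R) (hA : IsRookMatrix A) :
    ∃ (S : Matrix (Fin l) (Fin l) R) (P : Matrix (Fin l) (Fin k) R),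
      IsPermMatrix S ∧ IsRookMatrix P ∧ IsPseudoEchelon P ∧ A = S * P ∧
      (∀ i, (∀ j, P i j = 0) ↔ (∀ j, A i j = 0)) ∧
      (∀ j, (∀ i, P i j = 0) ↔ (∀ i, A i j = 0)) := by
  obtain ⟨σ, hσ, hP⟩ := hA.exists_perm_isPseudoEchelon_submatrix
  refine ⟨σ.symm.toPEquiv.toMatrix, A.submatrix σ id, ⟨σ, fun i j => ?_⟩,
    hA.submatrix σ.injective injective_id, hP, ?_, fun i => ?_, fun j => ?_⟩
  · simp [PEquiv.toMatrix_apply, symm_apply_eq]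
  · rw [PEquiv.toMatrix_toPEquiv_mul, Matrix.submatrix_submatrix]
    simp
  · simpa only [Matrix.submatrix_apply, id, not_exists, not_not] using not_congr (hσ i)
  · exact σ.forall_congr_right (q := fun i => A i j = 0)

theorem rookMatrix_eq_perm_mul_pseudoEchelon {l k : ℕ} {R : Type*} [CommRing R]
    [Nontrivial R] (A : Matrix (Fin l) (Fin k) R) (hA : IsRookMatrix A) :
    ∃ (S : Matrix (Fin l) (Fin l) R) (P : Matrix (Fin l) (Fin k) R),
      IsPermMatrix S ∧ IsRookMatrix P ∧ IsPseudoEchelon P ∧ A = S * P ∧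
      (∀ i, (∀ j, P i j = 0) ↔ (∀ j, A i j = 0)) ∧
      (∀ j, (∀ i, P i j = 0) ↔ (∀ i, A i j = 0)) :=
  rookMatrix_eq_perm_mul_pseudoEchelon_general A hA
end

section
/- Let R be a commutative ring with 0 ≠ 1 and let A be a rook matrix of size l × k over R. Then there is a unique rook matrix P of size l × k in pseudo-echelon form having exactly the same zero rows and zero columns as A, and there exist permutation matrices S of size l × l and S' of size k × k such that A = S * P and A = P * S' with this same matrix P. -/
/-!
A rook matrix is `f.toMatrix` for a partial bijection `f` from its nonzero rows onto its nonzero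
columns, and it is in pseudo-echelon form exactly when `f` is increasing. These two finite linear
orders are equinumerous, so there is exactly one increasing bijection between them; its matrix
is `P`. Two partial bijections with the same domain and the same range differ by a permutation
on either side: `f.trans g.symm` is a partial permutation whose domain equals its range, so it
extends by the identity to a permutation.
-/

theorem Option.mem_dite_choose {γ : Type*} {p : γ → Prop} [Decidable (∃ x, p x)]
    (hp : ∀ x y, p x → p y → x = y) {x : γ} :
    x ∈ (if h : ∃ x, p x then some h.choose else none) ↔ p x := by
  split_ifs with h
  · exact ⟨fun hx => Option.some_inj.1 hx ▸ h.choose_spec,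
      fun hx => congrArg some (hp _ _ h.choose_spec hx)⟩
  · simpa using fun hx => h ⟨x, hx⟩

namespace PEquiv

variable {α β : Type*}

theorem exists_mem_iff (r : α → β → Prop) (hr : ∀ a b b', r a b → r a b' → b = b')
    (hr' : ∀ a a' b, r a b → r a' b → a = a') : ∃ f : α ≃. β, ∀ a b, b ∈ f a ↔ r a b := by
  classical
  refine ⟨⟨fun a => if h : ∃ b, r a b then some h.choose else none,
    fun b => if h : ∃ a, r a b then some h.choose else none, fun a b => ?_⟩, fun a b => ?_⟩
  · exact (Option.mem_dite_choose (hr' · · b)).trans (Option.mem_dite_choose (hr a)).symm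
  · exact Option.mem_dite_choose (hr a)

section Perm

theorem exists_perm_getD_eq [Finite α] (h : α ≃. α) (hh : ∀ a, h a = none ↔ h.symm a = none) :
    ∃ σ : Equiv.Perm α, ∀ a, σ a = (h a).getD a := by
  suffices hinj : Function.Injective fun a => (h a).getD a from
    ⟨Equiv.ofBijective _ (Finite.injective_iff_bijective.1 hinj), fun _ => rfl⟩
  -- a point outside the domain is outside the range, so no other point is sent to it
  have hfix : ∀ a a' b, h a = some b → h a' = none → b ≠ a' := by
    rintro a a' b hb ha' rfl
    simpa [h.eq_some_iff.2 hb] using (hh b).1 ha'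
  intro a a' haa'
  rcases ha : h a with _ | b <;> rcases ha' : h a' with _ | b' <;>
    simp only [ha, ha', Option.getD_none, Option.getD_some] at haa'
  · exact haa'
  · exact absurd haa'.symm (hfix a' a b' ha' ha)
  · exact absurd haa' (hfix a a' b ha ha')
  · exact h.inj ha (haa' ▸ ha')

theorem trans_symm_eq_none_iff {f g : α ≃. β} (hran : ∀ b, g.symm b = none → f.symm b = none)
    (a : α) : f.trans g.symm a = none ↔ f a = none := by
  rcases hfa : f a with _ | b
  · simp [PEquiv.trans, hfa]
  · have hgb : g.symm b ≠ none := fun hgb => by simpa [f.eq_some_iff.2 hfa] using hran b hgb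
    simpa [PEquiv.trans, hfa] using hgb

theorem exists_perm_trans_eq [Finite α] {f g : α ≃. β} (hdom : ∀ a, f a = none ↔ g a = none)
    (hran : ∀ b, f.symm b = none ↔ g.symm b = none) :
    ∃ σ : Equiv.Perm α, σ.toPEquiv.trans g = f := by
  obtain ⟨σ, hσ⟩ := exists_perm_getD_eq (f.trans g.symm) fun a => by
    rw [symm_trans_rev, symm_symm, trans_symm_eq_none_iff (fun b => (hran b).2),
      trans_symm_eq_none_iff (fun b => (hran b).1), hdom]
  refine ⟨σ, ext fun a => ?_⟩
  rcases hfa : f a with _ | b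
  · simp [PEquiv.trans, Equiv.toPEquiv_apply, hσ, hfa, (hdom a).1 hfa]
  · obtain ⟨c, hc⟩ := Option.ne_none_iff_exists'.1 fun hgb => by
      simpa [f.eq_some_iff.2 hfa] using (hran b).2 hgb
    simp [PEquiv.trans, Equiv.toPEquiv_apply, hσ, hfa, hc, g.eq_some_iff.1 hc]

theorem exists_trans_perm_eq [Finite β] {f g : α ≃. β} (hdom : ∀ a, f a = none ↔ g a = none)
    (hran : ∀ b, f.symm b = none ↔ g.symm b = none) :
    ∃ τ : Equiv.Perm β, g.trans τ.toPEquiv = f := by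
  obtain ⟨τ, hτ⟩ := exists_perm_trans_eq (f := f.symm) (g := g.symm) hran hdom
  exact ⟨τ.symm, symm_injective (by rw [symm_trans_rev, ← Equiv.toPEquiv_symm, τ.symm_symm, hτ])⟩

end Perm

section ofSubtypeEquiv

variable {s : Set α} {t : Set β} [DecidablePred (· ∈ s)] [DecidablePred (· ∈ t)]

def ofSubtypeEquiv (e : s ≃ t) : α ≃. β where
  toFun a := if h : a ∈ s then some (e ⟨a, h⟩) else none
  invFun b := if h : b ∈ t then some (e.symm ⟨b, h⟩) else none
  inv a b := by
    by_cases ha : a ∈ s <;> by_cases hb : b ∈ t <;> simp only [ha, hb, dite_true, dite_false,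
      Option.some_inj, reduceCtorEq, false_iff, iff_false]
    · exact ⟨fun h => by subst h; simp, fun h => by subst h; simp⟩
    · exact fun h => hb (h ▸ (e ⟨a, ha⟩).2)
    · exact fun h => ha (h ▸ (e.symm ⟨b, hb⟩).2)

theorem mem_ofSubtypeEquiv (e : s ≃ t) {a : α} {b : β} :
    b ∈ ofSubtypeEquiv e a ↔ ∃ h : a ∈ s, (e ⟨a, h⟩ : β) = b := by
  by_cases ha : a ∈ s <;> simp [ofSubtypeEquiv, ha]

theorem ofSubtypeEquiv_eq_none_iff (e : s ≃ t) {a : α} : ofSubtypeEquiv e a = none ↔ a ∉ s := by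
  by_cases ha : a ∈ s <;> simp [ofSubtypeEquiv, ha]

theorem symm_ofSubtypeEquiv (e : s ≃ t) : (ofSubtypeEquiv e).symm = ofSubtypeEquiv e.symm :=
  rfl

end ofSubtypeEquiv

theorem card_dom_eq_card_ran [Fintype α] [Fintype β] (f : α ≃. β) :
    Fintype.card {a | (f a).isSome} = Fintype.card {b | (f.symm b).isSome} :=
  Fintype.card_congr
    { toFun a := ⟨(f a).get a.2, f.isSome_symm_get a.2⟩
      invFun b := ⟨(f.symm b).get b.2, f.symm.isSome_symm_get b.2⟩
      left_inv _ := Subtype.ext (Option.get_of_mem _ (f.eq_some_iff.2 (Option.some_get _).symm))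
      right_inv _ := Subtype.ext (Option.get_of_mem _ (f.eq_some_iff.1 (Option.some_get _).symm)) }

def IsMonotone [LT α] [LT β] (f : α ≃. β) : Prop :=
  ∀ ⦃a a' b b'⦄, b ∈ f a → b' ∈ f a' → a < a' → b < b'

section LinearOrder

variable [LinearOrder α] [LinearOrder β]

theorem isMonotone_ofSubtypeEquiv {s : Set α} {t : Set β} [DecidablePred (· ∈ s)]
    [DecidablePred (· ∈ t)] (e : s ≃o t) : (ofSubtypeEquiv e.toEquiv).IsMonotone := by
  simp only [IsMonotone, mem_ofSubtypeEquiv]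
  rintro a a' _ _ ⟨ha, rfl⟩ ⟨ha', rfl⟩ haa'
  exact e.strictMono (show (⟨a, ha⟩ : s) < ⟨a', ha'⟩ from haa')

theorem IsMonotone.not_lt_of_eqOn_Iio {g g' : α ≃. β} (hg' : g'.IsMonotone)
    (hran : ∀ b, g'.symm b = none → g.symm b = none) {a : α} (hbelow : Set.EqOn g g' (Set.Iio a))
    {b b' : β} (hb : b ∈ g a) (hb' : b' ∈ g' a) : ¬b < b' := by
  intro hlt
  obtain ⟨x, hx⟩ := Option.ne_none_iff_exists'.1 fun h => by
    simpa [g.eq_some_iff.2 hb] using hran b h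
  rw [g'.eq_some_iff] at hx
  rcases lt_trichotomy x a with hxa | rfl | hax
  · exact hxa.ne (g.inj ((hbelow hxa).trans hx) hb)
  · exact hlt.ne (Option.some_inj.1 (hx.symm.trans hb'))
  · exact lt_asymm hlt (hg' hb' hx hax)

theorem IsMonotone.eq_of_eq_none_iff [WellFoundedLT α] {g g' : α ≃. β} (hg : g.IsMonotone)
    (hg' : g'.IsMonotone) (hdom : ∀ a, g a = none ↔ g' a = none)
    (hran : ∀ b, g.symm b = none ↔ g'.symm b = none) : g = g' := by
  refine ext fun a => ?_
  induction a using WellFoundedLT.induction with | ind a ih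
  rcases hga : g a with _ | b <;> rcases hga' : g' a with _ | b'
  · rfl
  · simpa [hga'] using (hdom a).1 hga
  · simpa [hga] using (hdom a).2 hga'
  · rcases lt_trichotomy b b' with h | rfl | h
    · exact absurd h (hg'.not_lt_of_eqOn_Iio (fun b => (hran b).2) ih hga hga')
    · rfl
    · exact absurd h (hg.not_lt_of_eqOn_Iio (fun b => (hran b).1) (Set.EqOn.symm ih) hga' hga)

variable [Fintype α] [Fintype β]

noncomputable def echelon (f : α ≃. β) : α ≃. β :=
  ofSubtypeEquiv ((Fintype.orderIsoFinOfCardEq _ f.card_dom_eq_card_ran).symm.trans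
    (Fintype.orderIsoFinOfCardEq _ rfl)).toEquiv

theorem echelon_eq_none_iff (f : α ≃. β) (a : α) : f.echelon a = none ↔ f a = none := by
  simp [echelon, ofSubtypeEquiv_eq_none_iff]

theorem symm_echelon_eq_none_iff (f : α ≃. β) (b : β) :
    f.echelon.symm b = none ↔ f.symm b = none := by
  simp [echelon, symm_ofSubtypeEquiv, ofSubtypeEquiv_eq_none_iff]

theorem isMonotone_echelon (f : α ≃. β) : f.echelon.IsMonotone :=
  isMonotone_ofSubtypeEquiv _

end LinearOrder

section toMatrix

variable {m n R : Type*} [DecidableEq n] [Zero R] [One R] [NeZero (1 : R)]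

theorem toMatrix_apply_ne_zero_iff (f : m ≃. n) {i : m} {j : n} :
    (f.toMatrix i j : R) ≠ 0 ↔ j ∈ f i := by
  by_cases h : j ∈ f i <;> simp [h]

theorem toMatrix_apply_eq_one_iff (f : m ≃. n) {i : m} {j : n} :
    (f.toMatrix i j : R) = 1 ↔ j ∈ f i := by
  by_cases h : j ∈ f i <;> simp [h]

theorem forall_toMatrix_apply_eq_zero_iff (f : m ≃. n) (i : m) :
    (∀ j, (f.toMatrix i j : R) = 0) ↔ f i = none := by
  simp only [← not_ne_iff (b := (0 : R)), toMatrix_apply_ne_zero_iff,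
    Option.eq_none_iff_forall_not_mem]

theorem forall_toMatrix_apply_eq_zero_iff' (f : m ≃. n) (j : n) :
    (∀ i, (f.toMatrix i j : R) = 0) ↔ f.symm j = none := by
  simp only [← not_ne_iff (b := (0 : R)), toMatrix_apply_ne_zero_iff, ← mem_iff_mem f,
    Option.eq_none_iff_forall_not_mem]

end toMatrix

end PEquiv

section Rook

variable {l k : ℕ} {R : Type*} [CommRing R]

theorem IsRookMatrix.exists_toMatrix_eq {A : Matrix (Fin l) (Fin k) R} (hA : IsRookMatrix A) :
    ∃ f : Fin l ≃. Fin k, f.toMatrix = A := by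
  obtain ⟨h01, hrow, hcol⟩ := hA
  obtain ⟨f, hf⟩ := PEquiv.exists_mem_iff (fun i j => A i j = 1) hrow hcol
  refine ⟨f, Matrix.ext fun i j => ?_⟩
  rw [PEquiv.toMatrix_apply]
  split_ifs with h
  · exact ((hf i j).1 h).symm
  · exact ((h01 i j).resolve_right (mt (hf i j).2 h)).symm

theorem isPermMatrix_toMatrix_toPEquiv {n : ℕ} (σ : Equiv.Perm (Fin n)) :
    IsPermMatrix (σ.toPEquiv.toMatrix : Matrix _ _ R) :=
  ⟨σ.symm, fun i j => by simp [Equiv.toPEquiv_apply, Equiv.eq_symm_apply]⟩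

variable [Nontrivial R]

theorem isRookMatrix_toMatrix (f : Fin l ≃. Fin k) : IsRookMatrix (f.toMatrix : Matrix _ _ R) := by
  simp only [IsRookMatrix, PEquiv.toMatrix_apply_eq_one_iff]
  refine ⟨fun i j => ?_, fun i j j' hj hj' => ?_, fun i i' j hi hi' => f.inj hi hi'⟩
  · by_cases h : j ∈ f i <;> simp [h]
  · exact Option.some_inj.1 (hj.symm.trans hj')

theorem isPseudoEchelon_toMatrix_iff (f : Fin l ≃. Fin k) :
    IsPseudoEchelon (f.toMatrix : Matrix _ _ R) ↔ f.IsMonotone := by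
  simp only [IsPseudoEchelon, PEquiv.toMatrix_apply_ne_zero_iff, PEquiv.IsMonotone]
  exact ⟨fun h a a' b b' hb hb' ha => h a a' b b' ha hb hb',
    fun h a a' b b' ha hb hb' => h hb hb' ha⟩

end Rook

theorem rookMatrix_unique_pseudoEchelon_decomposition {l k : ℕ} {R : Type*}
    [CommRing R] [Nontrivial R] (A : Matrix (Fin l) (Fin k) R)
    (hA : IsRookMatrix A) :
    ∃ P : Matrix (Fin l) (Fin k) R,
      (IsRookMatrix P ∧ IsPseudoEchelon P ∧
        (∀ i, (∀ j, P i j = 0) ↔ (∀ j, A i j = 0)) ∧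
        (∀ j, (∀ i, P i j = 0) ↔ (∀ i, A i j = 0))) ∧
      (∀ Q : Matrix (Fin l) (Fin k) R,
        (IsRookMatrix Q ∧ IsPseudoEchelon Q ∧
          (∀ i, (∀ j, Q i j = 0) ↔ (∀ j, A i j = 0)) ∧
          (∀ j, (∀ i, Q i j = 0) ↔ (∀ i, A i j = 0))) → Q = P) ∧
      ∃ (S : Matrix (Fin l) (Fin l) R) (S' : Matrix (Fin k) (Fin k) R),
        IsPermMatrix S ∧ IsPermMatrix S' ∧ A = S * P ∧ A = P * S' := by
  obtain ⟨f, rfl⟩ := hA.exists_toMatrix_eq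
  have hdom := f.echelon_eq_none_iff
  have hran := f.symm_echelon_eq_none_iff
  refine ⟨f.echelon.toMatrix, ⟨isRookMatrix_toMatrix _,
    (isPseudoEchelon_toMatrix_iff _).2 f.isMonotone_echelon, ?_, ?_⟩, ?_, ?_⟩
  · simp only [PEquiv.forall_toMatrix_apply_eq_zero_iff, hdom, implies_true]
  · simp only [PEquiv.forall_toMatrix_apply_eq_zero_iff', hran, implies_true]
  · rintro Q ⟨hQ, hQe, hrows, hcols⟩
    obtain ⟨g, rfl⟩ := hQ.exists_toMatrix_eq
    simp only [PEquiv.forall_toMatrix_apply_eq_zero_iff,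
      PEquiv.forall_toMatrix_apply_eq_zero_iff'] at hrows hcols
    rw [((isPseudoEchelon_toMatrix_iff g).1 hQe).eq_of_eq_none_iff f.isMonotone_echelon
      (fun a => (hrows a).trans (hdom a).symm) (fun b => (hcols b).trans (hran b).symm)]
  · obtain ⟨σ, hσ⟩ := PEquiv.exists_perm_trans_eq (fun a => (hdom a).symm) fun b => (hran b).symm
    obtain ⟨τ, hτ⟩ := PEquiv.exists_trans_perm_eq (fun a => (hdom a).symm) fun b => (hran b).symm
    exact ⟨_, _, isPermMatrix_toMatrix_toPEquiv σ, isPermMatrix_toMatrix_toPEquiv τ,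
      by rw [← PEquiv.toMatrix_trans, hσ], by rw [← PEquiv.toMatrix_trans, hτ]⟩
end

section
/- Let k, l, m be natural numbers and let f : PEquiv (Fin k) (Fin l) and g : PEquiv (Fin l) (Fin m) be monotone partial equivalences. Then the composite partial equivalence f.trans g : PEquiv (Fin k) (Fin m) is monotone. (Diagrammatically: the composition of two planar rook diagrams is, up to a power of the parameter t, again a planar rook diagram.) -/
theorem monotone_trans_monotone {k l m : ℕ} (f : PEquiv (Fin k) (Fin l))
    (g : PEquiv (Fin l) (Fin m)) (hf : IsMonotonePE f) (hg : IsMonotonePE g) :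
    IsMonotonePE (f.trans g) := by
  intro p q i j hi hj hpq
  obtain ⟨a, ha, hga⟩ := (f.mem_trans g p i).1 hi
  obtain ⟨b, hb, hgb⟩ := (f.mem_trans g q j).1 hj
  exact hg a b i j hga hgb (hf p q a b ha hb hpq)
end

section
/- Let k, l be natural numbers and let f : PEquiv (Fin k) (Fin l) be a partial equivalence (a rook diagram) whose domain has cardinality r. Then f factors through its skeleton: there exist a monotone partial equivalence p₂ : PEquiv (Fin k) (Fin r), a permutation σ of Fin r, and a monotone partial equivalence p₁ : PEquiv (Fin r) (Fin l) such that f = (p₂.trans σ.toPEquiv).trans p₁. (Diagrammatically: every rook diagram D has a decomposition D = P₁ ∘ S ∘ P₂ where S is a permutation diagram and P₁, P₂ are planar rook diagrams.) -/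
/-!
Enumerate the domain and the range of `f` increasingly, by order embeddings
`u, v : Fin r ↪o _`; the range also has `r` elements because `f` is a bijection between the two.
Then `p₂ = u⁻¹` and `p₁ = v` are planar, and `σ = v⁻¹ ∘ f ∘ u` is a permutation of `Fin r`.
-/

open Finset Function

namespace Function.Embedding

variable {α γ : Type*}

noncomputable def toPEquiv (u : γ ↪ α) : γ ≃. α where
  toFun c := some (u c)
  invFun := partialInv u
  inv c a := (u.injective.isPartialInv c a).trans Option.some_inj.symm

@[simp] theorem toPEquiv_apply (u : γ ↪ α) (c : γ) : u.toPEquiv c = some (u c) := rfl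

theorem toPEquiv_symm_apply_eq_some_iff (u : γ ↪ α) {a : α} {c : γ} :
    u.toPEquiv.symm a = some c ↔ u c = a :=
  u.injective.isPartialInv c a

@[simp] theorem toPEquiv_symm_apply_self (u : γ ↪ α) (c : γ) :
    u.toPEquiv.symm (u c) = some c :=
  u.toPEquiv_symm_apply_eq_some_iff.mpr rfl

theorem toPEquiv_symm_apply_of_notMem_range (u : γ ↪ α) {a : α} (ha : a ∉ Set.range u) :
    u.toPEquiv.symm a = none :=
  Option.eq_none_iff_forall_ne_some.mpr fun c hc =>
    ha ⟨c, u.toPEquiv_symm_apply_eq_some_iff.mp hc⟩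

end Function.Embedding

namespace PEquiv

variable {α β γ δ : Type*}

theorem card_filter_isSome_symm [Fintype α] [Fintype β] (f : α ≃. β) :
    #{b | (f.symm b).isSome} = #{a | (f a).isSome} := by
  refine Finset.card_bij (fun b hb => (f.symm b).get (by simpa using hb)) ?_ ?_ ?_
  · intro b hb
    simp [f.eq_some_iff.mp (Option.some_get _).symm]
  · intro b _ b' _ h
    exact f.symm.inj (Option.get_mem _) (by rw [h]; exact Option.get_mem _)
  · intro a ha
    obtain ⟨b, hb⟩ := Option.isSome_iff_exists.mp (by simpa using ha)
    exact ⟨b, by simp [f.eq_some_iff.mpr hb], by simp [f.eq_some_iff.mpr hb]⟩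

theorem exists_equiv_apply_eq (f : α ≃. β) (u : γ ↪ α) (v : δ ↪ β)
    (hu : Set.range u = {a | (f a).isSome}) (hv : Set.range v = {b | (f.symm b).isSome}) :
    ∃ σ : γ ≃ δ, ∀ c, f (u c) = some (v (σ c)) := by
  have h : ∀ c, ∃ d, f (u c) = some (v d) := by
    intro c
    have huc : (f (u c)).isSome := hu.subset ⟨c, rfl⟩
    obtain ⟨b, hb⟩ := Option.isSome_iff_exists.mp huc
    obtain ⟨d, rfl⟩ : b ∈ Set.range v := hv ▸ (by simp [f.eq_some_iff.mpr hb])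
    exact ⟨d, hb⟩
  choose g hg using h
  have hg_inj : Injective g := fun c c' hcc' =>
    u.injective (f.inj (hg c) (by rw [hcc']; exact hg c'))
  have hg_surj : Surjective g := by
    intro d
    have hvd : (f.symm (v d)).isSome := hv.subset ⟨d, rfl⟩
    obtain ⟨a, ha⟩ := Option.isSome_iff_exists.mp hvd
    obtain ⟨c, rfl⟩ : a ∈ Set.range u := hu ▸ (by simp [f.eq_some_iff.mp ha])
    exact ⟨c, v.injective (Option.some_inj.mp ((hg c).symm.trans (f.eq_some_iff.mp ha)))⟩
  exact ⟨Equiv.ofBijective g ⟨hg_inj, hg_surj⟩, hg⟩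

theorem eq_trans_toPEquiv (f : α ≃. β) (u : γ ↪ α) (v : δ ↪ β) (σ : γ ≃ δ)
    (hu : {a | (f a).isSome} ⊆ Set.range u) (hσ : ∀ c, f (u c) = some (v (σ c))) :
    f = (u.toPEquiv.symm.trans σ.toPEquiv).trans v.toPEquiv := by
  ext1 a
  by_cases ha : a ∈ Set.range u
  · obtain ⟨c, rfl⟩ := ha
    simp [PEquiv.trans, hσ, Equiv.toPEquiv_apply]
  · have hfa : f a = none := Option.not_isSome_iff_eq_none.mp fun h => ha (hu h)
    simp [PEquiv.trans, hfa, u.toPEquiv_symm_apply_of_notMem_range ha]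

end PEquiv

theorem isMonotonePE_toPEquiv {m n : ℕ} (u : Fin m ↪o Fin n) :
    IsMonotonePE u.toEmbedding.toPEquiv := by
  intro p q i j hi hj hpq
  simp only [Function.Embedding.toPEquiv_apply, Option.mem_def, Option.some_inj] at hi hj
  subst hi hj
  exact u.strictMono hpq

theorem isMonotonePE_toPEquiv_symm {m n : ℕ} (u : Fin m ↪o Fin n) :
    IsMonotonePE u.toEmbedding.toPEquiv.symm := by
  intro p q i j hi hj hpq
  rw [Option.mem_def, Function.Embedding.toPEquiv_symm_apply_eq_some_iff] at hi hj
  subst hi hj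
  exact u.lt_iff_lt.mp hpq

theorem rook_factors_through_skeleton {k l r : ℕ}
    (f : PEquiv (Fin k) (Fin l))
    (hr : (Finset.univ.filter fun p : Fin k => (f p).isSome).card = r) :
    ∃ (p₂ : PEquiv (Fin k) (Fin r)) (σ : Equiv.Perm (Fin r))
      (p₁ : PEquiv (Fin r) (Fin l)),
      IsMonotonePE p₂ ∧ IsMonotonePE p₁ ∧
      f = (p₂.trans σ.toPEquiv).trans p₁ := by
  let u := orderEmbOfFin _ hr
  let v := orderEmbOfFin _ (f.card_filter_isSome_symm.trans hr)
  have hu : Set.range u = {a | (f a).isSome} := by simp [u]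
  obtain ⟨σ, hσ⟩ := f.exists_equiv_apply_eq u.toEmbedding v.toEmbedding hu (by simp [v])
  exact ⟨_, σ, _, isMonotonePE_toPEquiv_symm u, isMonotonePE_toPEquiv v,
    f.eq_trans_toPEquiv _ _ σ hu.symm.subset hσ⟩
end

section
/- Let k, l be natural numbers and let f : PEquiv (Fin k) (Fin l) be a partial equivalence (a rook diagram). Then there exist a monotone partial equivalence p : PEquiv (Fin k) (Fin l) and a permutation σ of Fin l such that f = p.trans σ.toPEquiv. (Diagrammatically: every rook diagram D has a decomposition D = S ∘ P where S is a permutation diagram and P is a planar rook diagram.) -/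
/-! Relabel the target so that the image of the `i`-th point of the domain of `f` (in increasing
order) becomes `i`. This relabelling is injective on the range of `f`, so it extends to a
permutation `τ` of `Fin l`; then `f ; τ` is planar and `f = (f ; τ) ; τ⁻¹`. -/

open Finset

theorem Finset.strictMonoOn_card_filter_lt {α : Type*} [LinearOrder α] (s : Finset α) :
    StrictMonoOn (fun x => #{z ∈ s | z < x}) s := fun x hx _ _ hxy =>
  card_lt_card <| (ssubset_iff_of_subset (monotone_filter_right s fun _ _ h => h.trans hxy)).2
    ⟨x, mem_filter.2 ⟨hx, hxy⟩, by simp⟩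

theorem Finset.card_filter_lt_lt_card {α : Type*} [LinearOrder α] {s : Finset α} {x : α}
    (hx : x ∈ s) : #{z ∈ s | z < x} < #s :=
  card_lt_card <| filter_ssubset.2 ⟨x, hx, lt_irrefl x⟩

namespace PEquiv

variable {α β : Type*}

theorem card_filter_isSome_le [Fintype α] [Fintype β] (f : α ≃. β) :
    #{a | (f a).isSome} ≤ Fintype.card β := by
  refine card_le_card_of_forall_subsingleton (fun a b => b ∈ f a) (fun a ha => ?_)
    (fun b _ a₁ ha₁ a₂ ha₂ => f.inj ha₁.2 ha₂.2)
  obtain ⟨b, hb⟩ := Option.isSome_iff_exists.1 (mem_filter.1 ha).2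
  exact ⟨b, mem_univ b, hb⟩

theorem exists_equiv_fin_of_injOn [Fintype β] {n : ℕ} (hn : Fintype.card β = n) (f : α ≃. β)
    (r : α → ℕ) (hr : Set.InjOn r {a | (f a).isSome}) (hrn : ∀ a, (f a).isSome → r a < n) :
    ∃ τ : β ≃ Fin n, ∀ a b, b ∈ f a → (τ b : ℕ) = r a := by
  classical
  let g : β → ℕ := fun b => (f.symm b).elim 0 r
  have hg : ∀ {a b}, b ∈ f a → g b = r a := fun h => by
    simp only [g, show f.symm _ = some _ from (f.mem_iff_mem).2 h, Option.elim_some]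
  have hdom : ∀ {b}, (f.symm b).isSome → ∃ a, b ∈ f a := fun hb => by
    obtain ⟨a, ha⟩ := Option.isSome_iff_exists.1 hb
    exact ⟨a, (f.mem_iff_mem).1 ha⟩
  have hmaps : Set.MapsTo g {b | (f.symm b).isSome} (range n) := fun b hb => by
    obtain ⟨a, ha⟩ := hdom hb
    simpa [hg ha] using hrn a (Option.isSome_of_mem ha)
  have hinj : Set.InjOn g {b | (f.symm b).isSome} := fun b₁ hb₁ b₂ hb₂ h => by
    obtain ⟨a₁, ha₁⟩ := hdom hb₁
    obtain ⟨a₂, ha₂⟩ := hdom hb₂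
    rw [hg ha₁, hg ha₂] at h
    obtain rfl := hr (Option.isSome_of_mem ha₁) (Option.isSome_of_mem ha₂) h
    exact Option.some_injective _ (ha₁.symm.trans ha₂)
  obtain ⟨e, he⟩ := hmaps.exists_equiv_extend_of_card_eq (by simp [hn]) hinj
  refine ⟨e.trans ((Equiv.subtypeEquivRight fun _ => mem_range).trans Fin.equivSubtype.symm),
    fun a b h => ?_⟩
  rw [← hg h]
  exact he b (Option.isSome_of_mem ((f.mem_iff_mem).2 h))

end PEquiv

theorem exists_perm_isMonotonePE_trans {k l : ℕ} (f : PEquiv (Fin k) (Fin l)) :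
    ∃ τ : Equiv.Perm (Fin l), IsMonotonePE (f.trans τ.toPEquiv) := by
  classical
  set s : Finset (Fin k) := {a | (f a).isSome}
  have hs : ∀ {a b}, b ∈ f a → a ∈ s := fun h => by simp [s, Option.isSome_of_mem h]
  obtain ⟨τ, hτ⟩ := f.exists_equiv_fin_of_injOn (Fintype.card_fin l) (fun a => #{x ∈ s | x < a})
    (by simpa [s] using s.strictMonoOn_card_filter_lt.injOn)
    (fun a ha => (card_filter_lt_lt_card (by simpa [s] using ha)).trans_le
      (by simpa using f.card_filter_isSome_le))
  refine ⟨τ, fun a a' i i' hi hi' haa' => ?_⟩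
  obtain ⟨b, hb, rfl⟩ : ∃ b ∈ f a, τ b = i := by simpa using (f.mem_trans _ a i).1 hi
  obtain ⟨b', hb', rfl⟩ : ∃ b ∈ f a', τ b = i' := by simpa using (f.mem_trans _ a' i').1 hi'
  rw [Fin.lt_def, hτ _ _ hb, hτ _ _ hb']
  exact s.strictMonoOn_card_filter_lt (hs hb) (hs hb') haa'

theorem rook_eq_planar_then_perm {k l : ℕ} (f : PEquiv (Fin k) (Fin l)) :
    ∃ (p : PEquiv (Fin k) (Fin l)) (σ : Equiv.Perm (Fin l)),
      IsMonotonePE p ∧ f = p.trans σ.toPEquiv := by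
  obtain ⟨τ, hτ⟩ := exists_perm_isMonotonePE_trans f
  refine ⟨f.trans τ.toPEquiv, τ.symm, hτ, ?_⟩
  rw [PEquiv.trans_assoc, ← Equiv.toPEquiv_trans, Equiv.self_trans_symm, Equiv.toPEquiv_refl,
    PEquiv.trans_refl]
end
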